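/- The Volt-Var control function f_q is Lipschitz continuous on ℝ with Lipschitz constant C_q = (p̄/ε_p)/√(1/μ² − 1) + q_lim/ε_q⁺; that is, |f_q(u) − f_q(w)| ≤ C_q·|u − w| for all real u, w. -/

import Mathlib

/-!
Write `f_q = q̄ · g`, where `g` is the normalised Volt-Var curve: a sum of two unit ramps of
widths `ε_q⁻` and `ε_q⁺`, separated by the dead band, so `|g| ≤ 1` and `g` has slope at most
`1/ε_q⁺` (glue the two ramps at a point of the dead band). The product rule for Lipschitz bounds
then gives `Lip(q̄) + q_lim / ε_q⁺`. Finally `q̄ = min q_lim √(s² - f_p²)`, where `f_p` has slope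
`p̄/ε_p` and values in `[0, μ s]`, and on `|p| ≤ μ s` the map `p ↦ √(s² - p²)` has slope at most
`μ s / √(s² - μ² s²) = 1 / √(1/μ² - 1)`.
-/

/-- The Volt-Watt control function. -/
noncomputable def voltWatt (pbar εp Vp : ℝ) (Δv : ℝ) : ℝ :=
  if Δv ≤ Vp - εp / 2 then pbar
  else if Δv < Vp + εp / 2 then (pbar / εp) * ((Vp + εp / 2) - Δv)
  else 0

/-- The available reactive power function. -/
noncomputable def qBar (s qlim pbar εp Vp : ℝ) (Δv : ℝ) : ℝ :=
  min qlim (Real.sqrt (s ^ 2 - (voltWatt pbar εp Vp Δv) ^ 2))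

/-- The Volt-Var control function. -/
noncomputable def voltVar (s qlim pbar εp Vp Vqp Vqm εqp εqm : ℝ) (Δv : ℝ) : ℝ :=
  if Δv ≤ Vqm - εqm / 2 then qBar s qlim pbar εp Vp Δv
  else if Δv < Vqm + εqm / 2 then
    (qBar s qlim pbar εp Vp Δv / εqm) * ((Vqm + εqm / 2) - Δv)
  else if Δv ≤ Vqp - εqp / 2 then 0
  else if Δv < Vqp + εqp / 2 then
    (qBar s qlim pbar εp Vp Δv / εqp) * ((Vqp - εqp / 2) - Δv)
  else -qBar s qlim pbar εp Vp Δv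

open Set

/-- The unit ramp falling from `1` at `a - ε` to `0` at `a`. -/
noncomputable def downRamp (a ε x : ℝ) : ℝ :=
  projIcc 0 1 zero_le_one ((a - x) / ε)

section downRamp

variable {a ε x : ℝ}

lemma downRamp_mem_Icc (a ε x : ℝ) : downRamp a ε x ∈ Icc (0 : ℝ) 1 :=
  (projIcc _ _ _ _).2

lemma abs_downRamp_sub_downRamp_le (hε : 0 < ε) (u w : ℝ) :
    |downRamp a ε u - downRamp a ε w| ≤ ε⁻¹ * |u - w| :=
  calc |downRamp a ε u - downRamp a ε w| ≤ |(a - u) / ε - (a - w) / ε| :=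
        abs_projIcc_sub_projIcc _
    _ = ε⁻¹ * |u - w| := by
        rw [← sub_div, abs_div, abs_of_pos hε, sub_sub_sub_cancel_left, abs_sub_comm]
        ring

lemma downRamp_of_le (hε : 0 < ε) (hx : x ≤ a - ε) : downRamp a ε x = 1 := by
  rw [downRamp, projIcc_of_right_le _ ((one_le_div hε).2 (by linarith))]

lemma downRamp_of_ge (hε : 0 ≤ ε) (hx : a ≤ x) : downRamp a ε x = 0 := by
  rw [downRamp, projIcc_of_le_left _ (div_nonpos_of_nonpos_of_nonneg (by linarith) hε)]

lemma downRamp_of_mem (hε : 0 < ε) (hl : a - ε ≤ x) (hr : x ≤ a) :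
    downRamp a ε x = (a - x) / ε := by
  rw [downRamp, projIcc_of_mem _
    ⟨div_nonneg (by linarith) hε.le, (div_le_one hε).2 (by linarith)⟩]

end downRamp

section voltWatt

variable {pbar εp Vp : ℝ}

lemma voltWatt_eq_mul_downRamp (hε : 0 < εp) (x : ℝ) :
    voltWatt pbar εp Vp x = pbar * downRamp (Vp + εp / 2) εp x := by
  unfold voltWatt
  split_ifs with hl hr
  · rw [downRamp_of_le hε (by linarith), mul_one]
  · rw [downRamp_of_mem hε (by linarith) hr.le]
    ring
  · rw [downRamp_of_ge hε.le (by linarith), mul_zero]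

lemma abs_voltWatt_le (hp : 0 ≤ pbar) (hε : 0 < εp) (x : ℝ) : |voltWatt pbar εp Vp x| ≤ pbar := by
  obtain ⟨h0, h1⟩ := downRamp_mem_Icc (Vp + εp / 2) εp x
  rw [voltWatt_eq_mul_downRamp hε, abs_of_nonneg (mul_nonneg hp h0)]
  exact mul_le_of_le_one_right hp h1

lemma abs_voltWatt_sub_voltWatt_le (hp : 0 ≤ pbar) (hε : 0 < εp) (u w : ℝ) :
    |voltWatt pbar εp Vp u - voltWatt pbar εp Vp w| ≤ pbar / εp * |u - w| := by
  rw [voltWatt_eq_mul_downRamp hε, voltWatt_eq_mul_downRamp hε, ← mul_sub, abs_mul,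
    abs_of_nonneg hp]
  exact (mul_le_mul_of_nonneg_left (abs_downRamp_sub_downRamp_le hε u w) hp).trans_eq (by ring)

end voltWatt

lemma abs_sqrt_sub_sqrt_le {m x y : ℝ} (hm : 0 < m) (hx : m ≤ x) (hy : m ≤ y) :
    |√x - √y| ≤ |x - y| / (2 * √m) := by
  have hprod : (√x - √y) * (√x + √y) = x - y := by
    linear_combination Real.sq_sqrt (hm.le.trans hx) - Real.sq_sqrt (hm.le.trans hy)
  rw [le_div_iff₀ (by positivity), ← hprod, abs_mul,
    abs_of_nonneg (add_nonneg (Real.sqrt_nonneg x) (Real.sqrt_nonneg y))]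
  gcongr
  linarith [Real.sqrt_le_sqrt hx, Real.sqrt_le_sqrt hy]

lemma abs_sqrt_sq_sub_sq_sub_le {s μ p q : ℝ} (hs : 0 < s) (hμ0 : 0 < μ) (hμ1 : μ < 1)
    (hp : |p| ≤ μ * s) (hq : |q| ≤ μ * s) :
    |√(s ^ 2 - p ^ 2) - √(s ^ 2 - q ^ 2)| ≤ |p - q| / √(1 / μ ^ 2 - 1) := by
  have hc : 0 < 1 / μ ^ 2 - 1 := sub_pos.2 (one_lt_one_div (by positivity) (by nlinarith))
  have hm : (μ * s) ^ 2 * (1 / μ ^ 2 - 1) = s ^ 2 - (μ * s) ^ 2 := by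
    field_simp
  have hbound : ∀ r, |r| ≤ μ * s → (μ * s) ^ 2 * (1 / μ ^ 2 - 1) ≤ s ^ 2 - r ^ 2 := by
    intro r hr
    rw [hm, sub_le_sub_iff_left, ← sq_abs r]
    exact pow_le_pow_left₀ (abs_nonneg r) hr 2
  calc |√(s ^ 2 - p ^ 2) - √(s ^ 2 - q ^ 2)|
      ≤ |(s ^ 2 - p ^ 2) - (s ^ 2 - q ^ 2)| / (2 * √((μ * s) ^ 2 * (1 / μ ^ 2 - 1))) :=
        abs_sqrt_sub_sqrt_le (by positivity) (hbound p hp) (hbound q hq)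
    _ = |p - q| * |p + q| / (2 * (μ * s) * √(1 / μ ^ 2 - 1)) := by
        rw [show (s ^ 2 - p ^ 2) - (s ^ 2 - q ^ 2) = (q - p) * (q + p) by ring, abs_mul,
          abs_sub_comm q p, add_comm q p,
          Real.sqrt_mul (sq_nonneg _), Real.sqrt_sq (by positivity)]
        ring
    _ ≤ |p - q| * (2 * (μ * s)) / (2 * (μ * s) * √(1 / μ ^ 2 - 1)) := by
        gcongr
        linarith [abs_add_le p q]
    _ = |p - q| / √(1 / μ ^ 2 - 1) := by
        field_simp

section qBar

variable {s qlim pbar εp Vp : ℝ}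

lemma abs_qBar_le (hq : 0 ≤ qlim) (x : ℝ) : |qBar s qlim pbar εp Vp x| ≤ qlim := by
  rw [qBar, abs_of_nonneg (le_min hq (Real.sqrt_nonneg _))]
  exact min_le_left _ _

lemma abs_qBar_sub_qBar_le {μ : ℝ} (hs : 0 < s) (hμ0 : 0 < μ) (hμ1 : μ < 1) (hε : 0 < εp)
    (hpbar : pbar = μ * s) (u w : ℝ) :
    |qBar s qlim pbar εp Vp u - qBar s qlim pbar εp Vp w| ≤
      (pbar / εp) / √(1 / μ ^ 2 - 1) * |u - w| := by
  have hp : 0 ≤ pbar := hpbar ▸ by positivity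
  calc |qBar s qlim pbar εp Vp u - qBar s qlim pbar εp Vp w|
      ≤ |√(s ^ 2 - voltWatt pbar εp Vp u ^ 2) - √(s ^ 2 - voltWatt pbar εp Vp w ^ 2)| := by
        simpa [qBar] using abs_min_sub_min_le_max qlim _ qlim _
    _ ≤ |voltWatt pbar εp Vp u - voltWatt pbar εp Vp w| / √(1 / μ ^ 2 - 1) :=
        abs_sqrt_sq_sub_sq_sub_le hs hμ0 hμ1 (hpbar ▸ abs_voltWatt_le hp hε u)
          (hpbar ▸ abs_voltWatt_le hp hε w)
    _ ≤ pbar / εp * |u - w| / √(1 / μ ^ 2 - 1) := by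
        gcongr
        exact abs_voltWatt_sub_voltWatt_le hp hε u w
    _ = (pbar / εp) / √(1 / μ ^ 2 - 1) * |u - w| := by ring

end qBar

lemma abs_sub_le_mul_abs_sub_of_Iic_of_Ici {f : ℝ → ℝ} {K : ℝ} (c : ℝ)
    (hle : ∀ u w, u ≤ c → w ≤ c → |f u - f w| ≤ K * |u - w|)
    (hge : ∀ u w, c ≤ u → c ≤ w → |f u - f w| ≤ K * |u - w|) (u w : ℝ) :
    |f u - f w| ≤ K * |u - w| := by
  wlog huw : u ≤ w generalizing u w
  · rw [abs_sub_comm, abs_sub_comm u]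
    exact this w u (le_of_not_ge huw)
  rcases le_total w c with hw | hw
  · exact hle u w (huw.trans hw) hw
  rcases le_total c u with hu | hu
  · exact hge u w hu (hu.trans huw)
  calc |f u - f w| ≤ |f u - f c| + |f c - f w| := abs_sub_le _ _ _
    _ ≤ K * |u - c| + K * |c - w| := add_le_add (hle u c hu le_rfl) (hge c w le_rfl hw)
    _ = K * |u - w| := by
        rw [abs_of_nonpos (sub_nonpos.2 hu), abs_of_nonpos (sub_nonpos.2 hw),
          abs_of_nonpos (sub_nonpos.2 huw)]
        ring

lemma abs_mul_sub_mul_le {f g : ℝ → ℝ} {Kf Kg Mf Mg : ℝ}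
    (hf : ∀ u w, |f u - f w| ≤ Kf * |u - w|) (hg : ∀ u w, |g u - g w| ≤ Kg * |u - w|)
    (hfM : ∀ x, |f x| ≤ Mf) (hgM : ∀ x, |g x| ≤ Mg) (u w : ℝ) :
    |f u * g u - f w * g w| ≤ (Kf * Mg + Mf * Kg) * |u - w| :=
  calc |f u * g u - f w * g w| = |(f u - f w) * g u + f w * (g u - g w)| := by ring_nf
    _ ≤ |f u - f w| * |g u| + |f w| * |g u - g w| := by
        rw [← abs_mul, ← abs_mul]
        exact abs_add_le _ _
    _ ≤ (Kf * |u - w|) * Mg + Mf * (Kg * |u - w|) := by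
        gcongr
        exacts [(abs_nonneg _).trans (hf u w), hf u w, hgM u, (abs_nonneg _).trans (hfM w),
          hfM w, hg u w]
    _ = (Kf * Mg + Mf * Kg) * |u - w| := by ring

/-- The Volt-Var curve normalised to `[-1, 1]`, so that `voltVar = qBar * voltVarShape`. -/
noncomputable def voltVarShape (Vqp Vqm εqp εqm x : ℝ) : ℝ :=
  downRamp (Vqm + εqm / 2) εqm x + downRamp (Vqp + εqp / 2) εqp x - 1

section voltVarShape

variable {Vqp Vqm εqp εqm : ℝ}

lemma abs_voltVarShape_le (x : ℝ) : |voltVarShape Vqp Vqm εqp εqm x| ≤ 1 := by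
  obtain ⟨hm0, hm1⟩ := downRamp_mem_Icc (Vqm + εqm / 2) εqm x
  obtain ⟨hp0, hp1⟩ := downRamp_mem_Icc (Vqp + εqp / 2) εqp x
  exact abs_le.2 ⟨by unfold voltVarShape; linarith, by unfold voltVarShape; linarith⟩

lemma voltVar_eq_qBar_mul_voltVarShape (s qlim pbar εp Vp : ℝ) (hεqp : 0 < εqp)
    (hεqm : 0 < εqm) (hband : Vqm + εqm / 2 ≤ Vqp - εqp / 2) (x : ℝ) :
    voltVar s qlim pbar εp Vp Vqp Vqm εqp εqm x =
      qBar s qlim pbar εp Vp x * voltVarShape Vqp Vqm εqp εqm x := by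
  unfold voltVar voltVarShape
  split_ifs with h₁ h₂ h₃ h₄
  · rw [downRamp_of_le hεqm (by linarith), downRamp_of_le hεqp (by linarith)]
    ring
  · rw [downRamp_of_mem hεqm (by linarith) h₂.le, downRamp_of_le hεqp (by linarith)]
    ring
  · rw [downRamp_of_ge hεqm.le (by linarith), downRamp_of_le hεqp (by linarith)]
    ring
  · rw [downRamp_of_ge hεqm.le (by linarith), downRamp_of_mem hεqp (by linarith) h₄.le]
    field_simp
    ring
  · rw [downRamp_of_ge hεqm.le (by linarith), downRamp_of_ge hεqp.le (by linarith)]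
    ring

lemma abs_voltVarShape_sub_voltVarShape_le (hεqp : 0 < εqp) (hεqm : εqp ≤ εqm)
    (hband : Vqm + εqm / 2 ≤ Vqp - εqp / 2) (u w : ℝ) :
    |voltVarShape Vqp Vqm εqp εqm u - voltVarShape Vqp Vqm εqp εqm w| ≤ εqp⁻¹ * |u - w| := by
  have hεqm₀ : 0 < εqm := hεqp.trans_le hεqm
  refine abs_sub_le_mul_abs_sub_of_Iic_of_Ici (Vqm + εqm / 2) (fun u w hu hw => ?_)
    (fun u w hu hw => ?_) u w
  · rw [voltVarShape, voltVarShape, downRamp_of_le hεqp (by linarith),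
      downRamp_of_le hεqp (by linarith), add_sub_cancel_right, add_sub_cancel_right]
    calc _ ≤ εqm⁻¹ * |u - w| := abs_downRamp_sub_downRamp_le hεqm₀ u w
      _ ≤ εqp⁻¹ * |u - w| := by gcongr
  · rw [voltVarShape, voltVarShape, downRamp_of_ge hεqm₀.le hu, downRamp_of_ge hεqm₀.le hw]
    simpa using abs_downRamp_sub_downRamp_le hεqp u w

end voltVarShape

theorem voltVar_lipschitz_general (s μ εp Vp qlim pbar Vqp Vqm εqp εqm : ℝ)
    (hs : 0 < s) (hμ0 : 0 < μ) (hμ1 : μ < 1) (hε : 0 < εp)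
    (hpbar : pbar = μ * s) (hq : 0 < qlim)
    (hεqp : 0 < εqp) (hεqm : εqp ≤ εqm)
    (hVqp' : 0 < Vqp - εqp / 2) (hVqm' : Vqm + εqm / 2 < 0) :
    ∀ u w : ℝ,
      |voltVar s qlim pbar εp Vp Vqp Vqm εqp εqm u -
        voltVar s qlim pbar εp Vp Vqp Vqm εqp εqm w| ≤
      ((pbar / εp) / Real.sqrt (1 / μ ^ 2 - 1) + qlim / εqp) * |u - w| := by
  intro u w
  have hband : Vqm + εqm / 2 ≤ Vqp - εqp / 2 := by linarith
  simp only [voltVar_eq_qBar_mul_voltVarShape s qlim pbar εp Vp hεqp (hεqp.trans_le hεqm) hband]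
  refine (abs_mul_sub_mul_le (abs_qBar_sub_qBar_le hs hμ0 hμ1 hε hpbar)
    (abs_voltVarShape_sub_voltVarShape_le hεqp hεqm hband) (abs_qBar_le hq.le)
    abs_voltVarShape_le u w).trans_eq ?_
  ring

theorem voltVar_lipschitz (s μ εp Vp qlim pbar Vqp Vqm εqp εqm : ℝ)
    (hs : 0 < s) (hμ0 : 0 < μ) (hμ1 : μ < 1) (hε : 0 < εp) (hV : 0 < Vp - εp / 2)
    (hpbar : pbar = μ * s) (hq : 0 < qlim)
    (hVqp : 0 < Vqp) (hVqm : Vqm < 0) (hεqp : 0 < εqp) (hεqm : εqp ≤ εqm)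
    (hVqp' : 0 < Vqp - εqp / 2) (hVqm' : Vqm + εqm / 2 < 0) :
    ∀ u w : ℝ,
      |voltVar s qlim pbar εp Vp Vqp Vqm εqp εqm u -
        voltVar s qlim pbar εp Vp Vqp Vqm εqp εqm w| ≤
      ((pbar / εp) / Real.sqrt (1 / μ ^ 2 - 1) + qlim / εqp) * |u - w| :=
  voltVar_lipschitz_general s μ εp Vp qlim pbar Vqp Vqm εqp εqm hs hμ0 hμ1 hε hpbar hq hεqp hεqm
    hVqp' hVqm'
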